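/- arXiv:2007.01495 — 3 statements merged into one kernel-verified Lean document; each statement's English description precedes it below -/
import Mathlib

section
/- Let ū : ℝⁿ → ℝ be a convex spacelike function whose blowdown satisfies ū(x) − V_F(x) → 0 as |x| → ∞, where F ⊂ S^{n-1} is closed and V_F(x) = sup_{ξ∈F} ξ·x. Then the Legendre transform ū* vanishes on ∂F̃ ∩ S^{n-1}, i.e., for every ξ ∈ F one has ū*(ξ) = sup_{x ∈ ℝⁿ}(x·ξ − ū(x)) = 0. -/
/-! The bound `ū ≥ V_F ≥ ⟪·, ξ⟫` makes `0` an upper bound for `x ↦ ⟪x, ξ⟫ - ū x`. Along the ray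
`r ξ` the support function satisfies `V_F (r ξ) ≤ ‖r ξ‖ = r = ⟪r ξ, ξ⟫`, so the values
`r - ū (r ξ)` dominate `V_F (r ξ) - ū (r ξ) → 0`, and every upper bound is nonnegative. -/

open Set Filter Metric RealInnerProductSpace

theorem EuclideanSpace.sum_mul_eq_inner {ι : Type*} [Fintype ι] (x y : EuclideanSpace ℝ ι) :
    ∑ i, x i * y i = ⟪x, y⟫ := by
  simp [PiLp.inner_apply, mul_comm]

section SupportFunction

variable {E : Type*} [NormedAddCommGroup E] [InnerProductSpace ℝ E] {F : Set E}

theorem inner_le_norm_of_subset_closedBall (hF : F ⊆ closedBall 0 1) (η : F) (x : E) :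
    ⟪(η : E), x⟫ ≤ ‖x‖ :=
  calc ⟪(η : E), x⟫ ≤ ‖(η : E)‖ * ‖x‖ := real_inner_le_norm _ _
    _ ≤ 1 * ‖x‖ := by gcongr; simpa using hF η.2
    _ = ‖x‖ := one_mul _

theorem iSup_inner_le_norm (hF : F ⊆ closedBall 0 1) (x : E) :
    ⨆ η : F, ⟪(η : E), x⟫ ≤ ‖x‖ :=
  Real.iSup_le (inner_le_norm_of_subset_closedBall hF · x) (norm_nonneg x)

theorem inner_le_iSup_inner (hF : F ⊆ closedBall 0 1) {ξ : E} (hξ : ξ ∈ F) (x : E) :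
    ⟪ξ, x⟫ ≤ ⨆ η : F, ⟪(η : E), x⟫ :=
  le_ciSup (f := fun η : F => ⟪(η : E), x⟫)
    ⟨‖x‖, forall_mem_range.2 (inner_le_norm_of_subset_closedBall hF · x)⟩ ⟨ξ, hξ⟩

theorem isLUB_range_inner_sub_of_tendsto (hF : F ⊆ closedBall 0 1) {u : E → ℝ}
    (hge : ∀ x, ⨆ η : F, ⟪(η : E), x⟫ ≤ u x) {ξ : E} (hξ : ξ ∈ F) (hξ1 : ‖ξ‖ = 1)
    (hlim : Tendsto (fun r : ℝ => u (r • ξ) - ⨆ η : F, ⟪(η : E), r • ξ⟫) atTop (nhds 0)) :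
    IsLUB (range fun x => ⟪x, ξ⟫ - u x) 0 := by
  refine ⟨forall_mem_range.2 fun x => ?_, fun b hb => ?_⟩
  · have := (real_inner_comm x ξ ▸ inner_le_iSup_inner hF hξ x).trans (hge x)
    linarith
  · have hneg := hlim.neg
    rw [neg_zero] at hneg
    refine le_of_tendsto hneg (eventually_ge_atTop 0 |>.mono fun r hr => ?_)
    have hray : ⨆ η : F, ⟪(η : E), r • ξ⟫ ≤ ⟪r • ξ, ξ⟫ := by
      simpa [norm_smul, hξ1, abs_of_nonneg hr, real_inner_smul_left, real_inner_self_eq_norm_sq]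
        using iSup_inner_le_norm hF (r • ξ)
    have := hb ⟨r • ξ, rfl⟩
    dsimp only at this ⊢
    linarith

end SupportFunction

theorem stmt_12_general (n : ℕ) (F : Set (EuclideanSpace ℝ (Fin n)))
    (hF1 : F ⊆ Metric.sphere 0 1)
    (ub VF : EuclideanSpace ℝ (Fin n) → ℝ)
    (hVF : ∀ x, VF x = ⨆ ξ : F, ∑ i, (ξ : EuclideanSpace ℝ (Fin n)) i * x i)
    (hge : ∀ x, VF x ≤ ub x)
    (hlim : ∀ ξ ∈ F, Filter.Tendsto (fun r : ℝ => ub (r • ξ) - VF (r • ξ))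
      Filter.atTop (nhds 0)) :
    ∀ ξ ∈ F, IsLUB
      (Set.range fun x : EuclideanSpace ℝ (Fin n) =>
        (∑ i, x i * (ξ : EuclideanSpace ℝ (Fin n)) i) - ub x) 0 := by
  intro ξ hξ
  have hVF' : VF = fun x => ⨆ η : F, ⟪(η : EuclideanSpace ℝ (Fin n)), x⟫ := by
    funext x
    simp only [hVF, EuclideanSpace.sum_mul_eq_inner]
  subst hVF'
  simp only [EuclideanSpace.sum_mul_eq_inner]
  exact isLUB_range_inner_sub_of_tendsto (hF1.trans sphere_subset_closedBall) hge hξ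
    (by simpa using hF1 hξ) (hlim ξ hξ)

/-- If `ū` is a convex spacelike function with `ū ≥ V_F` and
`ū(rξ) − V_F(rξ) → 0` as `r → ∞` for directions `ξ ∈ F`, then the Legendre transform of `ū`
vanishes at every `ξ ∈ F`, i.e. `sup_x (x·ξ − ū(x)) = 0`. -/
theorem stmt_12 (n : ℕ) (F : Set (EuclideanSpace ℝ (Fin n))) (hF : IsClosed F)
    (hF1 : F ⊆ Metric.sphere 0 1)
    (ub VF : EuclideanSpace ℝ (Fin n) → ℝ)
    (hVF : ∀ x, VF x = ⨆ ξ : F, ∑ i, (ξ : EuclideanSpace ℝ (Fin n)) i * x i)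
    (hconv : ConvexOn ℝ Set.univ ub)
    (hdiff : Differentiable ℝ ub)
    (hsp : ∀ x, ‖fderiv ℝ ub x‖ < 1)
    (hge : ∀ x, VF x ≤ ub x)
    (hlim : ∀ ξ ∈ F, Filter.Tendsto (fun r : ℝ => ub (r • ξ) - VF (r • ξ))
      Filter.atTop (nhds 0)) :
    ∀ ξ ∈ F, IsLUB
      (Set.range fun x : EuclideanSpace ℝ (Fin n) =>
        (∑ i, x i * (ξ : EuclideanSpace ℝ (Fin n)) i) - ub x) 0 :=
  stmt_12_general n F hF1 ub VF hVF hge hlim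
end

section
/- For any C² function u on a domain Ω ⊆ B₁ ⊂ ℝⁿ, with w = √(1−|ξ|²) and γ̃_ik = δ_ik − ξ_iξ_k/(1+w), the covariant Hessian of ũ = u/w with respect to the hyperbolic (Klein model) metric, computed in the orthonormal frame e_i = w γ̃_ik ∂/∂ξ_k, satisfies ∇̄_i∇̄_j(u/w) − (u/w)δ_ij = w γ̃_ik u_{kl} γ̃_lj, where u_{kl} = ∂²u/∂ξ_k∂ξ_l. -/
/-!
With `w = √(1 - |ξ|²)` one has `∂_s (1/w) = ξ_s / w³`, and the Christoffel symbols of the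
Klein metric are `Γ^s_ij = (ξ_i δ_js + ξ_j δ_is) / w²`. Expanding `∂_i ∂_j (u/w)`, the terms
carrying first derivatives of `u` are exactly cancelled by the Christoffel correction, so that
`∇̄²(u/w) = D²u / w + (u/w) k`. Conjugating with the frame, `w² γ̃ k γ̃ = I` because
`γ̃² = I - ξ ξᵀ` and `γ̃ ξ = w ξ`; hence `w² γ̃ ∇̄²(u/w) γ̃ - (u/w) I = w γ̃ D²u γ̃`.
-/

open scoped Matrix

theorem Matrix.sum_sum_mul_mul_apply {l m n o R : Type*} [Fintype m] [Fintype n]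
    [NonUnitalNonAssocSemiring R] (A : Matrix l m R) (B : Matrix m n R) (C : Matrix n o R)
    (i : l) (j : o) :
    ∑ k, ∑ k', A i k * B k k' * C k' j = (A * B * C) i j := by
  simp only [Matrix.mul_apply, Finset.sum_mul]
  exact Finset.sum_comm

namespace KleinModel

variable {n : ℕ}

noncomputable def dotProductCLM (ξ : Fin n → ℝ) : (Fin n → ℝ) →L[ℝ] ℝ :=
  ∑ l, ξ l • ContinuousLinearMap.proj l

@[simp]
lemma dotProductCLM_apply (ξ v : Fin n → ℝ) : dotProductCLM ξ v = ξ ⬝ᵥ v := by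
  simp [dotProductCLM, dotProduct]

noncomputable def kleinW (ξ : Fin n → ℝ) : ℝ := √(1 - ∑ l, ξ l ^ 2)

section Weight

variable {ξ : Fin n → ℝ}

lemma kleinW_pos (hξ : ∑ l, ξ l ^ 2 < 1) : 0 < kleinW ξ :=
  Real.sqrt_pos.mpr (by linarith)

lemma kleinW_sq (hξ : ∑ l, ξ l ^ 2 < 1) : kleinW ξ ^ 2 = 1 - ∑ l, ξ l ^ 2 :=
  Real.sq_sqrt (by linarith)

lemma hasFDerivAt_kleinW (hξ : ∑ l, ξ l ^ 2 < 1) :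
    HasFDerivAt kleinW (-(kleinW ξ)⁻¹ • dotProductCLM ξ) ξ := by
  have hsq : HasFDerivAt (fun η : Fin n → ℝ => 1 - ∑ l, η l ^ 2)
      (-(2 : ℝ) • dotProductCLM ξ) ξ := by
    refine ((hasFDerivAt_const _ _).sub (HasFDerivAt.fun_sum fun l _ =>
      (hasFDerivAt_apply l ξ).pow 2)).congr_fderiv ?_
    ext v
    simp [dotProduct, Finset.mul_sum, mul_assoc]
  refine ((Real.hasDerivAt_sqrt (by linarith)).comp_hasFDerivAt ξ hsq).congr_fderiv ?_
  ext v
  simp only [smul_apply, smul_eq_mul, dotProductCLM_apply, kleinW]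
  field_simp

lemma hasFDerivAt_div_kleinW_pow {g : (Fin n → ℝ) → ℝ} {g' : (Fin n → ℝ) →L[ℝ] ℝ}
    (hg : HasFDerivAt g g' ξ) (hξ : ∑ l, ξ l ^ 2 < 1) (k : ℕ) :
    HasFDerivAt (fun η => g η / kleinW η ^ k)
      ((kleinW ξ ^ k)⁻¹ • g' + (k * g ξ / kleinW ξ ^ (k + 2)) • dotProductCLM ξ) ξ := by
  have hW := (kleinW_pos hξ).ne'
  have hinv := (hasDerivAt_inv (pow_ne_zero k hW)).comp_hasFDerivAt ξ
    ((hasFDerivAt_kleinW hξ).pow k)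
  simp only [div_eq_mul_inv]
  refine (hg.mul hinv).congr_fderiv ?_
  ext v
  rcases k with _ | k
  · simp
  · simp only [add_tsub_cancel_right, nsmul_eq_mul, Function.comp_apply, add_apply,
      smul_apply, dotProductCLM_apply, smul_eq_mul]
    field_simp
    ring

lemma fderiv_div_kleinW_apply_single {u : (Fin n → ℝ) → ℝ} (hu : DifferentiableAt ℝ u ξ)
    (hξ : ∑ l, ξ l ^ 2 < 1) (s : Fin n) :
    fderiv ℝ (fun η => u η / kleinW η) ξ (Pi.single s 1)
      = fderiv ℝ u ξ (Pi.single s 1) / kleinW ξ + u ξ * ξ s / kleinW ξ ^ 3 := by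
  have h := hasFDerivAt_div_kleinW_pow hu.hasFDerivAt hξ 1
  simp only [pow_one] at h
  rw [h.fderiv]
  simp only [add_apply, smul_apply, smul_eq_mul, dotProductCLM_apply, dotProduct_single_one]
  ring

end Weight

noncomputable def euclideanHessian (f : (Fin n → ℝ) → ℝ) (ξ : Fin n → ℝ) :
    Matrix (Fin n) (Fin n) ℝ :=
  Matrix.of fun i j => fderiv ℝ (fun η => fderiv ℝ f η (Pi.single j 1)) ξ (Pi.single i 1)

lemma euclideanHessian_div_kleinW_apply {u : (Fin n → ℝ) → ℝ} {ξ : Fin n → ℝ}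
    (hu : ContDiffAt ℝ 2 u ξ) (hξ : ∑ l, ξ l ^ 2 < 1) (i j : Fin n) :
    euclideanHessian (fun η => u η / kleinW η) ξ i j
      = euclideanHessian u ξ i j / kleinW ξ
        + (fderiv ℝ u ξ (Pi.single j 1) * ξ i + fderiv ℝ u ξ (Pi.single i 1) * ξ j
          + u ξ * (if i = j then 1 else 0)) / kleinW ξ ^ 3
        + 3 * u ξ * ξ i * ξ j / kleinW ξ ^ 5 := by
  have hball : ∀ᶠ η in nhds ξ, ∑ l, η l ^ 2 < 1 :=
    (isOpen_lt (by fun_prop) continuous_const).mem_nhds hξ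
  have hfirst : (fun η => fderiv ℝ (fun η => u η / kleinW η) η (Pi.single j 1))
      =ᶠ[nhds ξ] fun η => fderiv ℝ u η (Pi.single j 1) / kleinW η ^ 1
        + u η * η j / kleinW η ^ 3 := by
    filter_upwards [hball, hu.eventually (by simp)] with η hη hηu
    rw [fderiv_div_kleinW_apply_single (hηu.differentiableAt two_ne_zero) hη, pow_one]
  have hDu : HasFDerivAt (fun η => fderiv ℝ u η (Pi.single j 1))
      (fderiv ℝ (fun η => fderiv ℝ u η (Pi.single j 1)) ξ) ξ :=
    (((hu.fderiv_right (m := 1) (by norm_num)).differentiableAt one_ne_zero).clm_apply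
      (differentiableAt_const _)).hasFDerivAt
  have hmul := (hu.differentiableAt two_ne_zero).hasFDerivAt.fun_mul (hasFDerivAt_apply j ξ)
  rw [euclideanHessian, Matrix.of_apply, hfirst.fderiv_eq,
    ((hasFDerivAt_div_kleinW_pow hDu hξ 1).fun_add (hasFDerivAt_div_kleinW_pow hmul hξ 3)).fderiv]
  have hW := (kleinW_pos hξ).ne'
  simp only [add_apply, smul_apply, smul_eq_mul, dotProductCLM_apply, dotProduct_single_one,
    ContinuousLinearMap.proj_apply, Pi.single_apply, eq_comm, euclideanHessian, Matrix.of_apply]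
  split_ifs <;> field_simp <;> ring

noncomputable def kleinMetric (ξ : Fin n → ℝ) : Matrix (Fin n) (Fin n) ℝ :=
  (kleinW ξ ^ 2)⁻¹ • (1 + (kleinW ξ ^ 2)⁻¹ • Matrix.vecMulVec ξ ξ)

noncomputable def kleinChristoffel (ξ : Fin n → ℝ) (s i j : Fin n) : ℝ :=
  (ξ i * (if j = s then 1 else 0) + ξ j * (if i = s then 1 else 0)) / (1 - ∑ l, ξ l ^ 2)

noncomputable def kleinHessian (f : (Fin n → ℝ) → ℝ) (ξ : Fin n → ℝ) : Matrix (Fin n) (Fin n) ℝ :=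
  euclideanHessian f ξ -
    Matrix.of fun i j => ∑ s, kleinChristoffel ξ s i j * fderiv ℝ f ξ (Pi.single s 1)

lemma sum_kleinChristoffel_mul (ξ v : Fin n → ℝ) (i j : Fin n) :
    ∑ s, kleinChristoffel ξ s i j * v s = (ξ i * v j + ξ j * v i) / (1 - ∑ l, ξ l ^ 2) := by
  simp [kleinChristoffel, add_mul, div_mul_eq_mul_div, Finset.sum_add_distrib, ← Finset.sum_div]

theorem kleinHessian_div_kleinW {u : (Fin n → ℝ) → ℝ} {ξ : Fin n → ℝ} (hu : ContDiffAt ℝ 2 u ξ)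
    (hξ : ∑ l, ξ l ^ 2 < 1) :
    kleinHessian (fun η => u η / kleinW η) ξ
      = (kleinW ξ)⁻¹ • euclideanHessian u ξ + (u ξ / kleinW ξ) • kleinMetric ξ := by
  ext i j
  have hW := (kleinW_pos hξ).ne'
  simp only [kleinHessian, kleinMetric, Matrix.sub_apply, Matrix.add_apply, Matrix.smul_apply,
    Matrix.of_apply, Matrix.one_apply, Matrix.vecMulVec_apply, smul_eq_mul,
    sum_kleinChristoffel_mul, euclideanHessian_div_kleinW_apply hu hξ,
    fderiv_div_kleinW_apply_single (hu.differentiableAt two_ne_zero) hξ, ← kleinW_sq hξ]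
  field_simp
  ring

noncomputable def kleinFrame (ξ : Fin n → ℝ) : Matrix (Fin n) (Fin n) ℝ :=
  1 - (1 + kleinW ξ)⁻¹ • Matrix.vecMulVec ξ ξ

section Frame

open Matrix

variable {ξ : Fin n → ℝ}

lemma dotProduct_self_eq_one_sub_kleinW_sq (hξ : ∑ l, ξ l ^ 2 < 1) :
    ξ ⬝ᵥ ξ = 1 - kleinW ξ ^ 2 := by
  simp [kleinW_sq hξ, dotProduct, sq]

lemma one_add_kleinW_ne_zero (hξ : ∑ l, ξ l ^ 2 < 1) : 1 + kleinW ξ ≠ 0 := by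
  linarith [kleinW_pos hξ]

lemma kleinFrame_mulVec_self (hξ : ∑ l, ξ l ^ 2 < 1) : kleinFrame ξ *ᵥ ξ = kleinW ξ • ξ := by
  have h := one_add_kleinW_ne_zero hξ
  ext i
  simp only [kleinFrame, sub_mulVec, one_mulVec, smul_mulVec, vecMulVec_mulVec,
    dotProduct_self_eq_one_sub_kleinW_sq hξ, Pi.sub_apply, Pi.smul_apply, smul_eq_mul,
    MulOpposite.smul_eq_mul_unop, MulOpposite.unop_op]
  field_simp
  ring

lemma vecMul_kleinFrame_self (hξ : ∑ l, ξ l ^ 2 < 1) : ξ ᵥ* kleinFrame ξ = kleinW ξ • ξ := by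
  have h := one_add_kleinW_ne_zero hξ
  ext i
  simp only [kleinFrame, vecMul_sub, vecMul_one, vecMul_smul, vecMul_vecMulVec,
    dotProduct_self_eq_one_sub_kleinW_sq hξ, Pi.sub_apply, Pi.smul_apply, smul_eq_mul]
  field_simp
  ring

lemma kleinFrame_mul_self (hξ : ∑ l, ξ l ^ 2 < 1) :
    kleinFrame ξ * kleinFrame ξ = 1 - vecMulVec ξ ξ := by
  have h := one_add_kleinW_ne_zero hξ
  simp only [kleinFrame, Matrix.sub_mul, Matrix.mul_sub, Matrix.one_mul, Matrix.mul_one,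
    Matrix.smul_mul, Matrix.mul_smul, vecMulVec_mul_vecMulVec,
    dotProduct_self_eq_one_sub_kleinW_sq hξ]
  ext i j
  simp only [vecMulVec_smul, Matrix.sub_apply, Matrix.smul_apply, smul_eq_mul]
  field_simp
  ring

theorem kleinFrame_mul_kleinMetric_mul_kleinFrame (hξ : ∑ l, ξ l ^ 2 < 1) :
    kleinW ξ ^ 2 • (kleinFrame ξ * kleinMetric ξ * kleinFrame ξ) = 1 := by
  have h := (kleinW_pos hξ).ne'
  rw [kleinMetric, Matrix.mul_smul, Matrix.smul_mul, smul_smul, mul_inv_cancel₀ (pow_ne_zero 2 h),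
    one_smul, Matrix.mul_add, Matrix.add_mul, Matrix.mul_one, kleinFrame_mul_self hξ,
    Matrix.mul_smul, Matrix.smul_mul, mul_vecMulVec, vecMulVec_mul, kleinFrame_mulVec_self hξ,
    vecMul_kleinFrame_self hξ, smul_vecMulVec, vecMulVec_smul, smul_smul, smul_smul]
  field_simp
  module

end Frame

theorem kleinFrame_conj_kleinHessian_div_kleinW {u : (Fin n → ℝ) → ℝ} {ξ : Fin n → ℝ}
    (hu : ContDiffAt ℝ 2 u ξ) (hξ : ∑ l, ξ l ^ 2 < 1) :
    kleinW ξ ^ 2 • (kleinFrame ξ * kleinHessian (fun η => u η / kleinW η) ξ * kleinFrame ξ)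
        - (u ξ / kleinW ξ) • 1
      = kleinW ξ • (kleinFrame ξ * euclideanHessian u ξ * kleinFrame ξ) := by
  rw [kleinHessian_div_kleinW hu hξ, Matrix.mul_add, Matrix.add_mul, Matrix.mul_smul,
    Matrix.smul_mul, Matrix.mul_smul, Matrix.smul_mul, smul_add,
    smul_comm (kleinW ξ ^ 2) (u ξ / kleinW ξ), kleinFrame_mul_kleinMetric_mul_kleinFrame hξ, add_sub_cancel_right, smul_smul]
  field_simp [(kleinW_pos hξ).ne']

end KleinModel

open KleinModel
/-- For a C² function `u` on `Ω ⊆ B₁`, the covariant Hessian of `ũ = u/w` with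
respect to the Klein-model hyperbolic metric, in the orthonormal frame `e_i = w γ̃_ik ∂_k`,
satisfies `∇̄_i∇̄_j(u/w) − (u/w)δ_ij = w γ̃_ik u_{kl} γ̃_lj`. -/
theorem stmt_14 (n : ℕ) (Ω : Set (Fin n → ℝ)) (hΩo : IsOpen Ω)
    (hΩ1 : Ω ⊆ {ξ | ∑ l, ξ l ^ 2 < 1})
    (u : (Fin n → ℝ) → ℝ) (hu : ContDiffOn ℝ 2 u Ω)
    (w : (Fin n → ℝ) → ℝ) (hw : ∀ ξ, w ξ = Real.sqrt (1 - ∑ l, ξ l ^ 2))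
    (γ : (Fin n → ℝ) → Fin n → Fin n → ℝ)
    (hγ : ∀ ξ i l, γ ξ i l = (if i = l then 1 else 0) - ξ i * ξ l / (1 + w ξ))
    (Γ : (Fin n → ℝ) → Fin n → Fin n → Fin n → ℝ)
    (hΓ : ∀ ξ s m' n', Γ ξ s m' n' =
      (ξ m' * (if n' = s then 1 else 0) + ξ n' * (if m' = s then 1 else 0))
        / (1 - ∑ l, ξ l ^ 2))
    (ut : (Fin n → ℝ) → ℝ) (hut : ∀ ξ, ut ξ = u ξ / w ξ)
    (ξ : Fin n → ℝ) (hmem : ξ ∈ Ω) :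
    ∀ i j,
      (w ξ) ^ 2 * (∑ m', ∑ n', γ ξ i m' *
          (fderiv ℝ (fun η => fderiv ℝ ut η (Pi.single n' 1)) ξ (Pi.single m' 1)
            - ∑ s, Γ ξ s m' n' * fderiv ℝ ut ξ (Pi.single s 1)) * γ ξ n' j)
        - ut ξ * (if i = j then 1 else 0)
      = w ξ * ∑ l, ∑ l', γ ξ i l *
          fderiv ℝ (fun η => fderiv ℝ u η (Pi.single l' 1)) ξ (Pi.single l 1) * γ ξ l' j := by
  intro i j
  have hξ : ∑ l, ξ l ^ 2 < 1 := hΩ1 hmem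
  obtain rfl : w = kleinW := funext hw
  obtain rfl : ut = fun η => u η / kleinW η := funext hut
  obtain rfl : Γ = kleinChristoffel := by ext; apply hΓ
  obtain rfl : γ = kleinFrame := by
    ext ξ i l
    simp [hγ, kleinFrame, Matrix.one_apply, Matrix.vecMulVec_apply, div_eq_inv_mul]
  have h := congrFun (congrFun (kleinFrame_conj_kleinHessian_div_kleinW
    (hu.contDiffAt (hΩo.mem_nhds hmem)) hξ) i) j
  rw [Matrix.sub_apply, Matrix.smul_apply, Matrix.smul_apply, Matrix.smul_apply,
    ← Matrix.sum_sum_mul_mul_apply, ← Matrix.sum_sum_mul_mul_apply] at h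
  simpa [kleinHessian, euclideanHessian, Matrix.one_apply] using h
end

section
/- Let λ₁ ≥ λ₂ ≥ ⋯ ≥ λₙ > 0 and F(λ) = (σ_n/σ_{n-k})^{1/k}(λ) with F^{ii} = ∂F/∂λ_i. Then for every i ≥ 2, (F^{ii} − F^{11})/(λ₁ − λ_i) − F^{ii}/λ₁ = σ_{n-1}(λ|1) σ_{n-k-1}(λ|1i)/(k F^{k-1} σ_{n-k}²) ≥ 0 (interpreting the left side as a limit when λ₁ = λ_i). -/
/-!
Each `σ_m` is affine in every variable: `σ_m(λ) = λ_j σ_{m-1}(λ|j) + σ_m(λ|j)`. Hence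
`∂_j σ_m = σ_{m-1}(λ|j)`, and since `σ_n(λ|j) = 0` the quotient rule collapses to
`F^{jj} = (1/k) F^{1-k} σ_{n-1}(λ|j) σ_{n-k}(λ|j) / σ_{n-k}²`. Expanding once more in the other
deleted variable, with `P = σ_{n-2}(λ|1i)`, `A = σ_{n-k-1}(λ|1i)`, `B = σ_{n-k}(λ|1i)`, one gets
`σ_{n-1}(λ|1) = λ_i P`, `σ_{n-1}(λ|i) = λ₁ P`, `σ_{n-k}(λ|1) = λ_i A + B`, `σ_{n-k}(λ|i) = λ₁ A + B`,
and the identity reduces to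
`(λ₁ P (λ₁ A + B) - λ_i P (λ_i A + B)) / (λ₁ - λ_i) - P (λ₁ A + B) = λ_i P A`.
-/

open Finset Function

theorem fderiv_rpow_div_apply {E : Type*} [NormedAddCommGroup E] [NormedSpace ℝ E]
    {f g : E → ℝ} {x : E} (hf : DifferentiableAt ℝ f x) (hg : DifferentiableAt ℝ g x)
    (hgx : g x ≠ 0) (hfx : f x ≠ 0) (p : ℝ) (v : E) :
    fderiv ℝ (fun y => (f y / g y) ^ p) x v = p * (f x / g x) ^ (p - 1) *
      ((fderiv ℝ f x v * g x - f x * fderiv ℝ g x v) / g x ^ 2) := by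
  have hf' : HasDerivAt (fun t : ℝ => f (x + t • v)) (fderiv ℝ f x v) 0 :=
    hf.hasFDerivAt.hasLineDerivAt v
  have hg' : HasDerivAt (fun t : ℝ => g (x + t • v)) (fderiv ℝ g x v) 0 :=
    hg.hasFDerivAt.hasLineDerivAt v
  have hline : HasLineDerivAt ℝ (fun y => (f y / g y) ^ p) (p * (f x / g x) ^ (p - 1) *
      ((fderiv ℝ f x v * g x - f x * fderiv ℝ g x v) / g x ^ 2)) x v := by
    have h := (hf'.fun_div hg' (by simpa using hgx)).rpow_const (p := p)
      (Or.inl (by simpa using div_ne_zero hfx hgx))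
    simp only [zero_smul, add_zero] at h
    exact h.congr_deriv (by ring)
  have hdiff : DifferentiableAt ℝ (fun y => (f y / g y) ^ p) x := by
    have hfg : f x / g x ≠ 0 := div_ne_zero hfx hgx
    fun_prop (disch := assumption)
  rw [← hdiff.lineDeriv_eq_fderiv]
  exact hline.lineDeriv

theorem rpow_one_div_pow_pred {x : ℝ} (hx : 0 < x) {k : ℕ} (hk : k ≠ 0) :
    (x ^ ((1 : ℝ) / k)) ^ (k - 1) = (x ^ ((1 : ℝ) / k - 1))⁻¹ := by
  rw [← Real.rpow_natCast, ← Real.rpow_mul hx.le, ← Real.rpow_neg hx.le,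
    Nat.cast_sub (Nat.one_le_iff_ne_zero.2 hk), Nat.cast_one]
  congr 1
  field_simp
  ring

section Algebra

variable {ι R : Type*} [Fintype ι] [DecidableEq ι]

/-- `σ_l(λ|j)` is encoded as `elemSymm l (update λ j 0)`. -/
noncomputable def elemSymm [CommSemiring R] (l : ℕ) (v : ι → R) : R :=
  ∑ t ∈ powersetCard l univ, ∏ i ∈ t, v i

variable [CommSemiring R]

theorem elemSymm_update_zero (l : ℕ) (v : ι → R) (j : ι) :
    elemSymm l (update v j 0) = ∑ t ∈ powersetCard l (univ.erase j), ∏ i ∈ t, v i := by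
  rw [elemSymm, ← sum_subset (powersetCard_mono (erase_subset j univ)) fun t ht hjt => ?_]
  · exact sum_congr rfl fun t ht => prod_congr rfl fun i hi =>
      update_of_ne (ne_of_mem_erase ((mem_powersetCard.1 ht).1 hi)) 0 v
  · have hjt : j ∈ t := by
      by_contra hj
      exact hjt (mem_powersetCard.2 ⟨fun i hi => mem_erase.2 ⟨ne_of_mem_of_not_mem hi hj,
        mem_univ i⟩, (mem_powersetCard.1 ht).2⟩)
    exact prod_eq_zero hjt (update_self j 0 v)

theorem elemSymm_succ (m : ℕ) (v : ι → R) (j : ι) :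
    elemSymm (m + 1) v = v j * elemSymm m (update v j 0) + elemSymm (m + 1) (update v j 0) := by
  have hj : j ∉ univ.erase j := notMem_erase j univ
  have hdisj : Disjoint ((powersetCard m (univ.erase j)).image (insert j))
      (powersetCard (m + 1) (univ.erase j)) := by
    refine disjoint_right.2 fun t ht ht' => ?_
    obtain ⟨s, -, rfl⟩ := mem_image.1 ht'
    exact hj ((mem_powersetCard.1 ht).1 (mem_insert_self j s))
  have hinj : Set.InjOn (insert j) (powersetCard m (univ.erase j) : Set (Finset ι)) :=
    fun s hs s' hs' h => by
      rw [← erase_insert fun h => hj ((mem_powersetCard.1 hs).1 h),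
        ← erase_insert fun h => hj ((mem_powersetCard.1 hs').1 h), h]
  have hprod (s) (hs : s ∈ powersetCard m (univ.erase j)) :
      ∏ i ∈ insert j s, v i = v j * ∏ i ∈ s, v i :=
    prod_insert fun h => hj ((mem_powersetCard.1 hs).1 h)
  rw [elemSymm_update_zero, elemSymm_update_zero, mul_sum, ← sum_congr rfl hprod,
    ← sum_image (f := fun t => ∏ i ∈ t, v i) hinj, ← sum_union hdisj]
  conv_lhs => rw [elemSymm, ← insert_erase (mem_univ j)]
  rw [powersetCard_succ_insert hj, union_comm]

theorem elemSymm_eq_zero_of_card_lt {l : ℕ} {v : ι → R} {s : Finset ι} (hs : ∀ i ∈ s, v i = 0)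
    (hl : Fintype.card ι < l + #s) : elemSymm l v = 0 :=
  sum_eq_zero fun t ht => by
    obtain ⟨i, hi⟩ := inter_nonempty_of_card_lt_card_add_card (subset_univ t) (subset_univ s)
      (by rwa [(mem_powersetCard.1 ht).2, card_univ])
    exact prod_eq_zero (mem_inter.1 hi).1 (hs i (mem_inter.1 hi).2)

theorem elemSymm_eq_mul_update_add {m : ℕ} (hm : m ≠ 0) (v : ι → R) (j : ι) :
    elemSymm m v = v j * elemSymm (m - 1) (update v j 0) + elemSymm m (update v j 0) := by
  obtain ⟨m, rfl⟩ := Nat.exists_eq_succ_of_ne_zero hm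
  exact elemSymm_succ m v j

theorem elemSymm_eq_mul_update {m : ℕ} {v : ι → R} {s : Finset ι} {j : ι}
    (hs : ∀ i ∈ s, v i = 0) (hj : j ∉ s) (hm : m ≠ 0) (hcard : Fintype.card ι < m + #s + 1) :
    elemSymm m v = v j * elemSymm (m - 1) (update v j 0) := by
  rw [elemSymm_eq_mul_update_add hm v j,
    elemSymm_eq_zero_of_card_lt (l := m) (v := update v j 0) (s := insert j s), add_zero]
  · intro i hi
    rcases mem_insert.1 hi with rfl | hi
    · exact update_self i 0 v
    · rw [update_of_ne (ne_of_mem_of_not_mem hi hj), hs i hi]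
  · rwa [card_insert_of_notMem hj, ← add_assoc]

theorem elemSymm_card_sub_one_update {N : ℕ} (hN : Fintype.card ι = N) {i j : ι} (hij : i ≠ j)
    (v : ι → R) :
    elemSymm (N - 1) (update v j 0) = v i * elemSymm (N - 2) (update (update v j 0) i 0) := by
  have hN2 : 2 ≤ N := hN ▸ Fintype.one_lt_card_iff.2 ⟨i, j, hij⟩
  rw [elemSymm_eq_mul_update (s := {j}) (j := i) (by simp) (by simpa using hij) (by omega)
    (by rw [hN, card_singleton]; omega), update_of_ne hij, Nat.sub_sub]

end Algebra

section Order

variable {ι R : Type*} [Fintype ι] [CommSemiring R] [PartialOrder R]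

theorem elemSymm_nonneg [IsOrderedRing R] (l : ℕ) {v : ι → R} (hv : 0 ≤ v) :
    0 ≤ elemSymm l v :=
  sum_nonneg fun _ _ => prod_nonneg fun i _ => hv i

theorem elemSymm_pos [IsStrictOrderedRing R] {l : ℕ} (hl : l ≤ Fintype.card ι) {v : ι → R}
    (hv : ∀ i, 0 < v i) : 0 < elemSymm l v :=
  sum_pos (fun _ _ => prod_pos fun i _ => hv i) (powersetCard_nonempty.2 (by rwa [card_univ]))

end Order

section Calculus

variable {ι 𝕜 : Type*} [Fintype ι] [NontriviallyNormedField 𝕜]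

theorem differentiable_elemSymm (l : ℕ) : Differentiable 𝕜 (elemSymm l : (ι → 𝕜) → 𝕜) := by
  unfold elemSymm
  fun_prop

variable [DecidableEq ι]

theorem fderiv_elemSymm_apply_single {m : ℕ} (hm : m ≠ 0) (v : ι → 𝕜) (j : ι) :
    fderiv 𝕜 (elemSymm m) v (Pi.single j 1) = elemSymm (m - 1) (update v j 0) := by
  have hline (t : 𝕜) : v + t • Pi.single j 1 = update v j (v j + t) := by
    ext i
    rcases eq_or_ne i j with rfl | hi <;> simp [*]
  have hderiv : HasDerivAt (fun t : 𝕜 => elemSymm m (v + t • Pi.single j 1))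
      (elemSymm (m - 1) (update v j 0)) 0 := by
    simp_rw [hline, elemSymm_eq_mul_update_add hm (update v j _) j, update_self, update_idem]
    simpa using (((hasDerivAt_id (0 : 𝕜)).const_add (v j)).mul_const
      (elemSymm (m - 1) (update v j 0))).add_const (elemSymm m (update v j 0))
  rw [← (differentiable_elemSymm m v).lineDeriv_eq_fderiv]
  exact HasLineDerivAt.lineDeriv hderiv

end Calculus

theorem fderiv_rpow_elemSymm_div_apply_single {ι : Type*} [Fintype ι] [DecidableEq ι] {N m : ℕ}
    (hN : Fintype.card ι = N) (hm : m ≠ 0) (hmN : m ≤ N) (p : ℝ) {v : ι → ℝ}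
    (hv : ∀ i, 0 < v i) (j : ι) :
    fderiv ℝ (fun u => (elemSymm N u / elemSymm m u) ^ p) v (Pi.single j 1) =
      p * (elemSymm N v / elemSymm m v) ^ (p - 1) *
        (elemSymm (N - 1) (update v j 0) * elemSymm m (update v j 0) / elemSymm m v ^ 2) := by
  have hN0 : N ≠ 0 := hN ▸ (Fintype.card_pos_iff.2 ⟨j⟩).ne'
  have hnum : elemSymm (N - 1) (update v j 0) * elemSymm m v
      - elemSymm N v * elemSymm (m - 1) (update v j 0)
      = elemSymm (N - 1) (update v j 0) * elemSymm m (update v j 0) := by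
    rw [elemSymm_eq_mul_update (s := ∅) (j := j) (by simp) (notMem_empty j) hN0 (by simp [hN]),
      elemSymm_eq_mul_update_add hm v j]
    ring
  rw [fderiv_rpow_div_apply (differentiable_elemSymm N v) (differentiable_elemSymm m v)
    (elemSymm_pos (hN ▸ hmN) hv).ne' (elemSymm_pos hN.ge hv).ne',
    fderiv_elemSymm_apply_single hN0, fderiv_elemSymm_apply_single hm, hnum]

theorem stmt_16_general (n k : ℕ) (hn : 0 < n) (hk : 1 ≤ k) (hkn : k < n)
    (esymm : ℕ → (Fin n → ℝ) → ℝ)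
    (hesymm : ∀ l v, esymm l v = ∑ t ∈ Finset.powersetCard l Finset.univ, ∏ i ∈ t, v i)
    (F : (Fin n → ℝ) → ℝ)
    (hF : ∀ v, F v = (esymm n v / esymm (n - k) v) ^ ((1 : ℝ) / k))
    (lam : Fin n → ℝ) (hpos : ∀ i, 0 < lam i)
    (i : Fin n) (hi : i ≠ ⟨0, hn⟩) :
    (lam ⟨0, hn⟩ ≠ lam i →
      (fderiv ℝ F lam (Pi.single i 1) - fderiv ℝ F lam (Pi.single ⟨0, hn⟩ 1))
          / (lam ⟨0, hn⟩ - lam i)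
        - fderiv ℝ F lam (Pi.single i 1) / lam ⟨0, hn⟩
      = esymm (n - 1) (Function.update lam ⟨0, hn⟩ 0)
          * esymm (n - k - 1) (Function.update (Function.update lam ⟨0, hn⟩ 0) i 0)
          / ((k : ℝ) * F lam ^ (k - 1) * (esymm (n - k) lam) ^ 2)) ∧
    0 ≤ esymm (n - 1) (Function.update lam ⟨0, hn⟩ 0)
          * esymm (n - k - 1) (Function.update (Function.update lam ⟨0, hn⟩ 0) i 0)
          / ((k : ℝ) * F lam ^ (k - 1) * (esymm (n - k) lam) ^ 2) := by
  obtain rfl : esymm = elemSymm := funext₂ hesymm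
  obtain rfl : F = fun v => (elemSymm n v / elemSymm (n - k) v) ^ ((1 : ℝ) / k) := funext hF
  set z : Fin n := ⟨0, hn⟩
  have hFderiv (j : Fin n) := fderiv_rpow_elemSymm_div_apply_single (Fintype.card_fin n)
    (by omega : n - k ≠ 0) (n.sub_le k) ((1 : ℝ) / k) hpos j
  have hQ : 0 < elemSymm n lam / elemSymm (n - k) lam :=
    div_pos (elemSymm_pos (Fintype.card_fin n).ge hpos)
      (elemSymm_pos ((n.sub_le k).trans (Fintype.card_fin n).ge) hpos)
  have hPz := elemSymm_card_sub_one_update (Fintype.card_fin n) hi lam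
  have hPi := elemSymm_card_sub_one_update (Fintype.card_fin n) hi.symm lam
  have hBz := elemSymm_eq_mul_update_add (by omega : n - k ≠ 0) (update lam z 0) i
  have hBi := elemSymm_eq_mul_update_add (by omega : n - k ≠ 0) (update lam i 0) z
  rw [update_comm hi] at hPi hBi
  rw [update_of_ne hi] at hBz
  rw [update_of_ne hi.symm] at hBi
  refine ⟨fun hne => ?_, ?_⟩
  · simp only [hFderiv, hPz, hPi, hBz, hBi, rpow_one_div_pow_pred hQ (by omega : k ≠ 0)]
    have hk0 : (k : ℝ) ≠ 0 := by positivity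
    have hab : lam z - lam i ≠ 0 := sub_ne_zero.2 hne
    have hz : lam z ≠ 0 := (hpos z).ne'
    have hc : (elemSymm n lam / elemSymm (n - k) lam) ^ ((1 : ℝ) / k - 1) ≠ 0 := by positivity
    field_simp
    ring
  · have hz0 : 0 ≤ update lam z 0 := le_update_iff.2 ⟨le_rfl, fun j _ => (hpos j).le⟩
    beta_reduce
    exact div_nonneg (mul_nonneg (elemSymm_nonneg _ hz0)
      (elemSymm_nonneg _ (le_update_iff.2 ⟨le_rfl, fun j _ => hz0 j⟩)))
      (mul_nonneg (mul_nonneg k.cast_nonneg (pow_nonneg (Real.rpow_nonneg hQ.le _) _))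
        (sq_nonneg _))

/-- For `λ₁ ≥ ⋯ ≥ λₙ > 0` and `F = (σ_n/σ_{n−k})^{1/k}`, for every `i ≥ 2`,
`(F^{ii} − F^{11})/(λ₁ − λ_i) − F^{ii}/λ₁ = σ_{n−1}(λ|1)σ_{n−k−1}(λ|1i)/(k F^{k−1} σ_{n−k}²) ≥ 0`
(the left-hand side interpreted for `λ₁ ≠ λ_i`). -/
theorem stmt_16 (n k : ℕ) (hn : 0 < n) (hk : 1 ≤ k) (hkn : k < n)
    (esymm : ℕ → (Fin n → ℝ) → ℝ)
    (hesymm : ∀ l v, esymm l v = ∑ t ∈ Finset.powersetCard l Finset.univ, ∏ i ∈ t, v i)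
    (F : (Fin n → ℝ) → ℝ)
    (hF : ∀ v, F v = (esymm n v / esymm (n - k) v) ^ ((1 : ℝ) / k))
    (lam : Fin n → ℝ) (hpos : ∀ i, 0 < lam i)
    (hsort : ∀ i j : Fin n, i ≤ j → lam j ≤ lam i)
    (i : Fin n) (hi : i ≠ ⟨0, hn⟩) :
    (lam ⟨0, hn⟩ ≠ lam i →
      (fderiv ℝ F lam (Pi.single i 1) - fderiv ℝ F lam (Pi.single ⟨0, hn⟩ 1))
          / (lam ⟨0, hn⟩ - lam i)
        - fderiv ℝ F lam (Pi.single i 1) / lam ⟨0, hn⟩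
      = esymm (n - 1) (Function.update lam ⟨0, hn⟩ 0)
          * esymm (n - k - 1) (Function.update (Function.update lam ⟨0, hn⟩ 0) i 0)
          / ((k : ℝ) * F lam ^ (k - 1) * (esymm (n - k) lam) ^ 2)) ∧
    0 ≤ esymm (n - 1) (Function.update lam ⟨0, hn⟩ 0)
          * esymm (n - k - 1) (Function.update (Function.update lam ⟨0, hn⟩ 0) i 0)
          / ((k : ℝ) * F lam ^ (k - 1) * (esymm (n - k) lam) ^ 2) :=
  stmt_16_general n k hn hk hkn esymm hesymm F hF lam hpos i hi
end
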